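/- arXiv:2302.01172 — 2 statements merged into one kernel-verified Lean document; each statement's English description precedes it below -/
import Mathlib

section
/- Let 0 < β < 1, t > t_0 ≥ 1, and suppose (1-β^{t_0})^2 ≥ 1/2 and t - t_0 ≥ 1/(1-β^2). Let c_i be the coefficients of v̂_t - v̂_{t_0}, namely c_i = (1-β)(β^{t-i}/(1-β^t) - β^{t_0-i}/(1-β^{t_0})) for i ≤ t_0 and c_i = (1-β)β^{t-i}/(1-β^t) for t_0 < i ≤ t. Then Σ_{i=1}^t c_i^2 ≤ 2(1-β)^2 (t - t_0). -/
open Finset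

private lemma sum_pow_reflect (r : ℝ) (a b : ℕ) :
    ∑ i ∈ Icc (a+1) b, r^(b-i) = ∑ j ∈ range (b-a), r^j := by
  rw [← Finset.Ico_add_one_right_eq_Icc, Finset.sum_Ico_eq_sum_range]
  have h : b + 1 - (a + 1) = b - a := by omega
  rw [h, ← Finset.sum_range_reflect]
  apply Finset.sum_congr rfl
  intro i hi
  congr 1
  simp only [mem_range] at hi
  omega

private lemma nat_mul_ge (β : ℝ) (h0 : 0 ≤ β) (h1 : β ≤ 1) :
    ∀ n : ℕ, 2 ≤ n → 2*(1 - β^n) ≤ (n:ℝ)*(1-β^2) := by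
  intro n hn
  induction n with
  | zero => omega
  | succ m ih =>
    rcases Nat.lt_or_ge m 2 with hm | hm
    · have : m = 1 := by omega
      subst this
      norm_num
    · have hih := ih hm
      have hpow : β^m ≤ β := pow_le_of_le_one h0 h1 (by omega)
      have : β^(m+1) = β^m * β := by ring
      push_cast
      nlinarith [sq_nonneg (1-β), pow_nonneg h0 m]

private lemma poly_key (X E V : ℝ) (hX0 : 0 ≤ X) (hX1 : X ≤ 1)
    (hE : E = 1 - (3/10)*X) (hV1 : 1 ≤ V) (hV2 : 2*(1-X) ≤ V) :
    2*(1-X)^2 + (1-X^2) ≤ 2*V*E^2 := by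
  subst hE
  rcases le_total X (1/2) with hx | hx
  · have h1 : 2*(1-X)^2 + (1-X^2) ≤ 4*(1-X)*(1 - (3/10)*X)^2 := by
      nlinarith [mul_nonneg (by linarith : (0:ℝ) ≤ 1-X)
        (by nlinarith : (0:ℝ) ≤ 1 - (14/10)*X + (36/100)*X^2)]
    have h2 : 4*(1-X)*(1 - (3/10)*X)^2 ≤ 2*V*(1 - (3/10)*X)^2 := by
      nlinarith [mul_le_mul_of_nonneg_right hV2 (sq_nonneg (1 - (3/10)*X))]
    linarith
  · have h1 : 2*(1-X)^2 + (1-X^2) ≤ 2*(1 - (3/10)*X)^2 := by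
      nlinarith [mul_nonneg (by linarith : (0:ℝ) ≤ X - 1/2)
        (by linarith : (0:ℝ) ≤ 1 - X)]
    have h2 : 2*(1 - (3/10)*X)^2 ≤ 2*V*(1 - (3/10)*X)^2 := by
      nlinarith [mul_le_mul_of_nonneg_right hV1 (sq_nonneg (1 - (3/10)*X))]
    linarith

set_option maxHeartbeats 1000000 in
theorem coeff_sq_sum_bound (β : ℝ) (hβ : 0 < β) (hβ1 : β < 1)
    (t₀ t : ℕ) (ht₀ : 1 ≤ t₀) (ht : t₀ < t)
    (hpre : (1 - β ^ t₀) ^ 2 ≥ 1 / 2)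
    (hwin : (t : ℝ) - t₀ ≥ 1 / (1 - β ^ 2))
    (c : ℕ → ℝ)
    (hc : ∀ i ∈ Icc 1 t,
      c i = if i ≤ t₀ then
        (1 - β) * (β ^ (t - i) / (1 - β ^ t) - β ^ (t₀ - i) / (1 - β ^ t₀))
      else (1 - β) * β ^ (t - i) / (1 - β ^ t)) :
    ∑ i ∈ Icc 1 t, (c i) ^ 2 ≤ 2 * (1 - β) ^ 2 * ((t : ℝ) - t₀) := by
  set n : ℕ := t - t₀ with hn
  set X : ℝ := β ^ n with hX
  set P : ℝ := β ^ t₀ with hP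
  have hB2 : (0:ℝ) < 1 - β^2 := by nlinarith
  have hB2' : (1:ℝ) - β^2 < 1 := by nlinarith
  -- n ≥ 2
  have hwin' : (1:ℝ) < 1/(1-β^2) := by
    rw [lt_div_iff₀ hB2]; nlinarith
  have hcast : ((t:ℝ) - t₀) = (n:ℝ) := by
    rw [hn]; push_cast [Nat.cast_sub ht.le]; ring
  have hn2 : 2 ≤ n := by
    have : (1:ℝ) < (n:ℝ) := by rw [← hcast]; linarith
    exact_mod_cast by exact_mod_cast Nat.lt_of_lt_of_le (by exact_mod_cast this) (le_refl n)
  -- basic bounds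
  have hX0 : 0 < X := pow_pos hβ n
  have hX1 : X < 1 := pow_lt_one₀ hβ.le hβ1 (by omega)
  have hP0 : 0 < P := pow_pos hβ t₀
  have hP1 : P < 1 := pow_lt_one₀ hβ.le hβ1 (by omega)
  have hP3 : P ≤ 3/10 := by nlinarith [hpre]
  have hQ : β ^ t = P * X := by
    rw [hP, hX, ← pow_add]; congr 1; omega
  have hQ1 : P * X < 1 := by nlinarith
  have hQE : 1 - P*X ≥ 1 - (3/10)*X := by nlinarith
  have hE : (0:ℝ) < 1 - (3/10)*X := by nlinarith
  have hDP : 0 < 1 - P := by linarith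
  have hDQ : 0 < 1 - P*X := by linarith
  -- U facts
  have hU1 : (1:ℝ) ≤ (n:ℝ) * (1 - β^2) := by
    rw [← hcast]
    rw [ge_iff_le, div_le_iff₀ hB2] at hwin
    linarith
  have hU2 : 2*(1 - X) ≤ (n:ℝ) * (1-β^2) := nat_mul_ge β hβ.le hβ1.le n hn2
  -- split the sum
  have hsplit : ∑ i ∈ Icc 1 t, (c i)^2
      = ∑ i ∈ Icc 1 t₀, (c i)^2 + ∑ i ∈ Icc (t₀+1) t, (c i)^2 := by
    rw [← Finset.sum_union]
    · congr 1
      ext i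
      simp only [mem_union, mem_Icc]
      omega
    · rw [Finset.disjoint_left]
      intro i hi hi'
      simp only [mem_Icc] at hi hi'
      omega
  set K1 : ℝ := (1-β)^2 * (1-X)^2 / ((1-P*X)^2 * (1-P)^2) with hK1def
  set K2 : ℝ := (1-β)^2 / (1-P*X)^2 with hK2def
  have hK1nn : 0 ≤ K1 := by positivity
  have hK2nn : 0 ≤ K2 := by positivity
  -- head sum
  have hhead : ∑ i ∈ Icc 1 t₀, (c i)^2 = K1 * ∑ j ∈ range t₀, (β^2)^j := by
    have : ∑ i ∈ Icc 1 t₀, (c i)^2 = ∑ i ∈ Icc 1 t₀, K1 * (β^2)^(t₀ - i) := by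
      apply Finset.sum_congr rfl
      intro i hi
      simp only [mem_Icc] at hi
      have hit : i ∈ Icc 1 t := by simp only [mem_Icc]; omega
      rw [hc i hit, if_pos hi.2]
      have hexp : t - i = n + (t₀ - i) := by omega
      have hw2 : (β^(t₀-i))^2 = (β^2)^(t₀-i) := by
        rw [← pow_mul, ← pow_mul, Nat.mul_comm]
      rw [hexp, pow_add, hQ, hK1def, ← hw2]
      field_simp
      ring
    rw [this, ← Finset.mul_sum]
    congr 1
    have := sum_pow_reflect (β^2) 0 t₀
    simpa using this
  -- tail sum
  have htail : ∑ i ∈ Icc (t₀+1) t, (c i)^2 = K2 * ∑ j ∈ range n, (β^2)^j := by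
    have : ∑ i ∈ Icc (t₀+1) t, (c i)^2 = ∑ i ∈ Icc (t₀+1) t, K2 * (β^2)^(t-i) := by
      apply Finset.sum_congr rfl
      intro i hi
      simp only [mem_Icc] at hi
      have hit : i ∈ Icc 1 t := by simp only [mem_Icc]; omega
      rw [hc i hit, if_neg (by omega)]
      have hw2 : (β^(t-i))^2 = (β^2)^(t-i) := by
        rw [← pow_mul, ← pow_mul, Nat.mul_comm]
      rw [hQ, hK2def, ← hw2]
      field_simp
    rw [this, ← Finset.mul_sum, sum_pow_reflect (β^2) t₀ t]
  -- geometric sums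
  have hne : (β^2 : ℝ) ≠ 1 := ne_of_lt (by nlinarith)
  have hgeom1 : ∑ j ∈ range t₀, (β^2)^j ≤ 1/(1-β^2) := by
    rw [geom_sum_eq hne]
    have h1 : (β^2)^t₀ = P^2 := by rw [← pow_mul, ← pow_mul, Nat.mul_comm]
    have h2 : ((β^2)^t₀ - 1)/(β^2 - 1) = (1 - P^2)/(1-β^2) := by
      rw [h1, div_eq_div_iff (by nlinarith : (β^2 - 1 : ℝ) ≠ 0) hB2.ne']
      ring
    rw [h2, div_le_div_iff₀ hB2 hB2]
    nlinarith [sq_nonneg P]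
  have hgeom2 : ∑ j ∈ range n, (β^2)^j = (1 - X^2)/(1-β^2) := by
    rw [geom_sum_eq hne]
    have h1 : (β^2)^n = X^2 := by rw [← pow_mul, ← pow_mul, Nat.mul_comm]
    rw [h1, div_eq_div_iff (by nlinarith : (β^2 - 1 : ℝ) ≠ 0) hB2.ne']
    ring
  -- assemble
  rw [hsplit, hhead, htail, hgeom2, hcast]
  set E : ℝ := 1 - (3/10)*X with hEdef
  have hQE' : E ≤ 1 - P*X := hQE
  have hE' : (0:ℝ) < E := hE
  clear_value E
  clear_value n X P K1 K2
  have hE2 : (0:ℝ) < E^2 := pow_pos hE' 2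
  have hEQ2 : E^2 ≤ (1-P*X)^2 := pow_le_pow_left₀ hE'.le hQE' 2
  have hX2nn : (0:ℝ) ≤ 1 - X^2 := by
    have := mul_nonneg (by linarith : (0:ℝ) ≤ 1 - X) (by linarith : (0:ℝ) ≤ 1 + X)
    nlinarith [this]
  have hK1b : K1 ≤ 2*(1-β)^2*(1-X)^2 / E^2 := by
    rw [hK1def, div_le_div_iff₀ (by positivity) hE2]
    have h1 : E^2 * (1/2) ≤ (1-P*X)^2 * (1-P)^2 :=
      mul_le_mul hEQ2 hpre (by norm_num) (sq_nonneg _)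
    have h3 : E^2 ≤ 2*((1-P*X)^2*(1-P)^2) := by linarith
    have h4 := mul_le_mul_of_nonneg_left h3 (by positivity : (0:ℝ) ≤ (1-β)^2*(1-X)^2)
    calc (1-β)^2*(1-X)^2*E^2 = (1-β)^2*(1-X)^2*(E^2) := by ring
      _ ≤ (1-β)^2*(1-X)^2*(2*((1-P*X)^2*(1-P)^2)) := h4
      _ = 2*(1-β)^2*(1-X)^2*((1-P*X)^2*(1-P)^2) := by ring
  have hK2b : K2 ≤ (1-β)^2 / E^2 := by
    rw [hK2def]
    exact div_le_div_of_nonneg_left (sq_nonneg _) hE2 hEQ2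
  have hBinv : (0:ℝ) ≤ 1/(1-β^2) := by positivity
  have hstep1 : K1 * ∑ j ∈ range t₀, (β^2)^j
      ≤ (2*(1-β)^2*(1-X)^2 / E^2) * (1/(1-β^2)) := by
    calc K1 * ∑ j ∈ range t₀, (β^2)^j ≤ K1 * (1/(1-β^2)) :=
          mul_le_mul_of_nonneg_left hgeom1 hK1nn
      _ ≤ (2*(1-β)^2*(1-X)^2 / E^2) * (1/(1-β^2)) :=
          mul_le_mul_of_nonneg_right hK1b hBinv
  have hstep2 : K2 * ((1-X^2)/(1-β^2)) ≤ ((1-β)^2/E^2) * ((1-X^2)/(1-β^2)) :=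
    mul_le_mul_of_nonneg_right hK2b (div_nonneg hX2nn hB2.le)
  -- the key polynomial inequality
  have hpoly : 2*(1-X)^2 + (1-X^2) ≤ 2*((n:ℝ)*(1-β^2))*E^2 :=
    poly_key X E ((n:ℝ)*(1-β^2)) hX0.le hX1.le hEdef hU1 hU2
  have hrw : (2*(1-β)^2*(1-X)^2 / E^2) * (1/(1-β^2)) + ((1-β)^2/E^2) * ((1-X^2)/(1-β^2))
      = (1-β)^2 * (2*(1-X)^2 + (1-X^2)) / (E^2 * (1-β^2)) := by
    field_simp
  have hfinal : (2*(1-β)^2*(1-X)^2 / E^2) * (1/(1-β^2)) + ((1-β)^2/E^2) * ((1-X^2)/(1-β^2))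
      ≤ 2*(1-β)^2*(n:ℝ) := by
    rw [hrw, div_le_iff₀ (mul_pos hE2 hB2)]
    calc (1-β)^2 * (2*(1-X)^2 + (1-X^2)) ≤ (1-β)^2 * (2*((n:ℝ)*(1-β^2))*E^2) :=
          mul_le_mul_of_nonneg_left hpoly (sq_nonneg (1-β))
      _ = 2*(1-β)^2*(n:ℝ) * (E^2*(1-β^2)) := by ring
  linarith [hstep1, hstep2, hfinal]
end

section
/- Suppose g_1, g_2, ... are independent real random variables, identically distributed (stationary second moments: E[g_i²] = E[g_j²] for all i,j), with |g_i²| ≤ G almost surely for some G > 0. Let 0 < β < 1, and define the bias-corrected exponential moving average of squares v̂_s = (1-β)/(1-β^s) · Σ_{i=1}^s β^{s-i} g_i². Fix t_0 > log_β(1 - 1/√2) and t > t_0, and assume t - t_0 ≥ 1/(1-β²). Then for any δ ∈ (0,1), with probability at least 1 - δ, |v̂_t - v̂_{t_0}| < √( 8 G² (1-β)² (t - t_0) log(2/δ) ). -/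
/-!
Both `v̂_t` and `v̂_{t₀}` are weighted averages of `g_1², …, g_t²` whose weights sum to one, so
their difference is `∑ cᵢ g_i²` with `∑ cᵢ = 0`; by stationarity of the means this is the centred
sum `∑ cᵢ (g_i² - E g_i²)`. Since `1 - β^{t₀} > 1/√2 > 1/2`, every weight lies in
`[0, 2(1-β)]`, whence `cᵢ² ≤ 2(1-β)|cᵢ|` and `∑ cᵢ² ≤ 4(1-β) ≤ 8(1-β)²(t-t₀)`, the last step by
the window condition `t - t₀ ≥ 1/(1-β²)`. Hoeffding's inequality for the weighted sum of the
independent `[0, G]`-valued `g_i²` then gives the two-sided bound.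
-/

open MeasureTheory ProbabilityTheory Finset
open scoped NNReal

lemma sum_sq_sub_le_of_mem_Icc {ι : Type*} {s : Finset ι} {u v : ι → ℝ} {a : ℝ}
    (hu : ∀ i ∈ s, u i ∈ Set.Icc 0 a) (hv : ∀ i ∈ s, v i ∈ Set.Icc 0 a) :
    ∑ i ∈ s, (u i - v i) ^ 2 ≤ a * (∑ i ∈ s, u i + ∑ i ∈ s, v i) := by
  rw [← sum_add_distrib, mul_sum]
  gcongr with i hi
  obtain ⟨hu0, hua⟩ := hu i hi
  obtain ⟨hv0, hva⟩ := hv i hi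
  rcases le_total (u i) (v i) with h | h <;> nlinarith

lemma sum_Icc_pow_sub {M : Type*} [Semiring M] (x : M) (n : ℕ) :
    ∑ i ∈ Icc 1 n, x ^ (n - i) = ∑ j ∈ range n, x ^ j := by
  rw [← Ico_add_one_right_eq_Icc, sum_Ico_reflect _ _ le_rfl, Nat.sub_self, Nat.add_sub_cancel,
    range_eq_Ico]

/-- The weight of `g_i²` in `v̂_s`, extended by zero past `s` so that `v̂_t` and `v̂_{t₀}` become
sums over the same range. -/
noncomputable def emaWeight (β : ℝ) (s i : ℕ) : ℝ :=
  if i ≤ s then (1 - β) / (1 - β ^ s) * β ^ (s - i) else 0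

section emaWeight

variable {β : ℝ} {s t t₀ n : ℕ}

lemma sum_Icc_emaWeight_mul (hsn : s ≤ n) (y : ℕ → ℝ) :
    ∑ i ∈ Icc 1 n, emaWeight β s i * y i =
      (1 - β) / (1 - β ^ s) * ∑ i ∈ Icc 1 s, β ^ (s - i) * y i := by
  have hfilter : (Icc 1 n).filter (· ≤ s) = Icc 1 s := by
    ext i
    simp only [mem_filter, mem_Icc]
    omega
  simp only [emaWeight, ite_mul, zero_mul]
  rw [← sum_filter, hfilter, mul_sum]
  exact sum_congr rfl fun i _ ↦ by ring

lemma sum_Icc_emaWeight (hβ0 : 0 ≤ β) (hβ1 : β < 1) (hs : s ≠ 0) (hsn : s ≤ n) :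
    ∑ i ∈ Icc 1 n, emaWeight β s i = 1 := by
  have h := sum_Icc_emaWeight_mul (β := β) hsn 1
  simp only [Pi.one_apply, mul_one] at h
  have hβs : β ^ s < 1 := pow_lt_one₀ hβ0 hβ1 hs
  rw [h, sum_Icc_pow_sub, geom_sum_eq hβ1.ne, div_mul_div_comm,
    div_eq_one_iff_eq (by nlinarith)]
  ring

lemma emaWeight_mem_Icc (hβ0 : 0 ≤ β) (hβ1 : β ≤ 1) (i : ℕ) :
    emaWeight β s i ∈ Set.Icc 0 ((1 - β) / (1 - β ^ s)) := by
  have hA : 0 ≤ (1 - β) / (1 - β ^ s) :=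
    div_nonneg (by linarith) (by linarith [pow_le_one₀ hβ0 hβ1 (n := s)])
  unfold emaWeight
  split_ifs
  · exact ⟨by positivity, mul_le_of_le_one_right hA (pow_le_one₀ hβ0 hβ1)⟩
  · exact ⟨le_rfl, hA⟩

lemma sum_Icc_emaWeight_sub_mul (hβ0 : 0 ≤ β) (hβ1 : β < 1) (ht₀ : t₀ ≠ 0) (ht : t₀ ≤ t)
    (y : ℕ → ℝ) (m : ℝ) :
    ∑ i ∈ Icc 1 t, (emaWeight β t i - emaWeight β t₀ i) * (y i - m) =
      (1 - β) / (1 - β ^ t) * ∑ i ∈ Icc 1 t, β ^ (t - i) * y i -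
        (1 - β) / (1 - β ^ t₀) * ∑ i ∈ Icc 1 t₀, β ^ (t₀ - i) * y i := by
  have hexpand : ∀ i, (emaWeight β t i - emaWeight β t₀ i) * (y i - m) =
      (emaWeight β t i * y i - emaWeight β t₀ i * y i) -
        (emaWeight β t i - emaWeight β t₀ i) * m :=
    fun i ↦ by ring
  simp only [hexpand, sum_sub_distrib, ← sum_mul, sum_Icc_emaWeight_mul le_rfl,
    sum_Icc_emaWeight_mul ht, sum_Icc_emaWeight hβ0 hβ1 ht₀ ht,
    sum_Icc_emaWeight hβ0 hβ1 (by omega : t ≠ 0) le_rfl]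
  ring

lemma sum_sq_emaWeight_sub_le (hβ0 : 0 ≤ β) (hβ1 : β < 1) (ht₀ : β ^ t₀ ≤ 1 / 2) (ht : t₀ ≤ t)
    (hwin : 1 / (1 - β ^ 2) ≤ (t : ℝ) - t₀) :
    ∑ i ∈ Icc 1 t, (emaWeight β t i - emaWeight β t₀ i) ^ 2 ≤
      8 * (1 - β) ^ 2 * ((t : ℝ) - t₀) := by
  have ht₀0 : t₀ ≠ 0 := by rintro rfl; norm_num at ht₀
  have hA : (1 - β) / (1 - β ^ t) ≤ (1 - β) / (1 - β ^ t₀) :=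
    div_le_div_of_nonneg_left (by linarith) (by linarith)
      (by linarith [pow_le_pow_of_le_one hβ0 hβ1.le ht])
  have hA₀ : (1 - β) / (1 - β ^ t₀) ≤ 2 * (1 - β) := by
    rw [div_le_iff₀ (by linarith)]
    nlinarith
  have hwin' : 1 ≤ ((t : ℝ) - t₀) * ((1 - β) * (1 + β)) := by
    rw [div_le_iff₀ (by nlinarith)] at hwin
    linear_combination hwin
  calc ∑ i ∈ Icc 1 t, (emaWeight β t i - emaWeight β t₀ i) ^ 2
      ≤ (1 - β) / (1 - β ^ t₀) *
          (∑ i ∈ Icc 1 t, emaWeight β t i + ∑ i ∈ Icc 1 t, emaWeight β t₀ i) :=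
        sum_sq_sub_le_of_mem_Icc
          (fun i _ ↦ Set.Icc_subset_Icc_right hA (emaWeight_mem_Icc hβ0 hβ1.le i))
          (fun i _ ↦ emaWeight_mem_Icc hβ0 hβ1.le i)
    _ ≤ 2 * (1 - β) * 2 := by
        rw [sum_Icc_emaWeight hβ0 hβ1 (by omega) le_rfl, sum_Icc_emaWeight hβ0 hβ1 ht₀0 ht]
        linarith
    _ ≤ 8 * (1 - β) ^ 2 * ((t : ℝ) - t₀) := by nlinarith

lemma pow_le_half_of_logb_lt (hβ0 : 0 < β) (hβ1 : β < 1)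
    (ht₀ : Real.logb β (1 - 1 / √2) < t₀) : β ^ t₀ ≤ 1 / 2 := by
  have h1 : 1 / √2 < 1 := by rw [div_lt_one (by positivity)]; exact Real.one_lt_sqrt_two
  have h2 : 1 / 2 ≤ 1 / √2 :=
    one_div_le_one_div_of_le (by positivity) (Real.sqrt_le_self_iff.2 (by norm_num))
  rw [Real.logb_lt_iff_lt_rpow_of_base_lt_one hβ0 hβ1 (by linarith), Real.rpow_natCast] at ht₀
  linarith

end emaWeight

namespace ProbabilityTheory.HasSubgaussianMGF

variable {Ω : Type*} {mΩ : MeasurableSpace Ω} {μ : Measure Ω} {X : Ω → ℝ} {c : ℝ≥0}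

lemma mono (h : HasSubgaussianMGF X c μ) {c' : ℝ≥0} (hc : c ≤ c') :
    HasSubgaussianMGF X c' μ where
  integrable_exp_mul := h.integrable_exp_mul
  mgf_le t := (h.mgf_le t).trans (by gcongr)

lemma measure_abs_lt_ge [IsProbabilityMeasure μ] (h : HasSubgaussianMGF X c μ) {ε : ℝ}
    (hε : 0 ≤ ε) :
    ENNReal.ofReal (1 - 2 * Real.exp (-ε ^ 2 / (2 * c))) ≤ μ {ω | |X ω| < ε} := by
  have hcover : Set.univ ⊆ {ω | |X ω| < ε} ∪ ({ω | ε ≤ X ω} ∪ {ω | ε ≤ (-X) ω}) := by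
    intro ω _
    simp only [Set.mem_union, Set.mem_ofPred_eq, Pi.neg_apply]
    by_contra! H
    exact H.1.not_gt (abs_lt.2 ⟨by linarith, H.2.1⟩)
  refine ENNReal.ofReal_le_of_le_toReal ?_
  have hunion := (measureReal_mono (μ := μ) hcover).trans ((measureReal_union_le _ _).trans
    (add_le_add_right (measureReal_union_le _ _) _))
  rw [probReal_univ] at hunion
  change _ ≤ μ.real _
  linarith [h.measure_ge_le hε, h.neg.measure_ge_le hε]

end ProbabilityTheory.HasSubgaussianMGF

namespace ProbabilityTheory

variable {Ω ι : Type*} {mΩ : MeasurableSpace Ω} {μ : Measure Ω} [IsProbabilityMeasure μ]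
  {Y : ι → Ω → ℝ} {a b : ℝ}

lemma hasSubgaussianMGF_sum_mul_sub_integral (hY : ∀ i, AEMeasurable (Y i) μ)
    (hindep : iIndepFun Y μ) (hbdd : ∀ i, ∀ᵐ ω ∂μ, Y i ω ∈ Set.Icc a b) (w : ι → ℝ)
    (s : Finset ι) :
    HasSubgaussianMGF (fun ω ↦ ∑ i ∈ s, w i * (Y i ω - μ[Y i]))
      (∑ i ∈ s, ‖w i‖₊ ^ 2 * (‖b - a‖₊ / 2) ^ 2) μ := by
  refine HasSubgaussianMGF.sum_of_iIndepFun
    (hindep.comp (fun i x ↦ w i * (x - μ[Y i])) fun i ↦ by fun_prop) fun i _ ↦ ?_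
  rw [show ‖w i‖₊ ^ 2 = ⟨w i ^ 2, sq_nonneg _⟩ from NNReal.eq (by simp; rfl)]
  exact (hasSubgaussianMGF_of_mem_Icc (hY i) (hbdd i)).const_mul (w i)

lemma measure_abs_sum_mul_sub_integral_lt_ge (hY : ∀ i, AEMeasurable (Y i) μ)
    (hindep : iIndepFun Y μ) (hbdd : ∀ i, ∀ᵐ ω ∂μ, Y i ω ∈ Set.Icc a b) (w : ι → ℝ)
    (s : Finset ι) {V : ℝ} (hV : ∑ i ∈ s, w i ^ 2 ≤ V) {ε : ℝ} (hε : 0 ≤ ε) :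
    ENNReal.ofReal (1 - 2 * Real.exp (-2 * ε ^ 2 / ((b - a) ^ 2 * V))) ≤
      μ {ω | |∑ i ∈ s, w i * (Y i ω - μ[Y i])| < ε} := by
  have hV0 : 0 ≤ V := (sum_nonneg fun i _ ↦ sq_nonneg (w i)).trans hV
  have hc : ∑ i ∈ s, ‖w i‖₊ ^ 2 * (‖b - a‖₊ / 2) ^ 2 ≤ ((b - a) ^ 2 * V / 4).toNNReal := by
    rw [← NNReal.coe_le_coe, Real.coe_toNNReal _ (by positivity)]
    push_cast
    rw [← sum_mul]
    simp only [Real.norm_eq_abs, div_pow, sq_abs]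
    nlinarith [mul_le_mul_of_nonneg_right hV (sq_nonneg (b - a))]
  convert ((hasSubgaussianMGF_sum_mul_sub_integral hY hindep hbdd w s).mono hc).measure_abs_lt_ge
    hε using 5
  rw [Real.coe_toNNReal _ (by positivity),
    show 2 * ((b - a) ^ 2 * V / 4) = (b - a) ^ 2 * V / 2 by ring, div_div_eq_mul_div]
  ring

lemma two_mul_exp_neg_two_mul_log_le {δ : ℝ} (hδ0 : 0 < δ) (hδ2 : δ ≤ 2) :
    2 * Real.exp (-2 * Real.log (2 / δ)) ≤ δ := by
  have hL : 0 ≤ Real.log (2 / δ) := Real.log_nonneg (by rw [le_div_iff₀ hδ0]; linarith)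
  calc 2 * Real.exp (-2 * Real.log (2 / δ)) ≤ 2 * Real.exp (-Real.log (2 / δ)) := by
        gcongr; linarith
    _ = δ := by rw [Real.exp_neg, Real.exp_log (by positivity), inv_div]; ring

end ProbabilityTheory

/-- Scalar version of Theorem 1 of the STEP paper: concentration of the difference
of bias-corrected exponential moving averages of the squared gradients. -/
theorem step_theorem_scalar
    {Ω : Type*} [MeasureSpace Ω] [IsProbabilityMeasure (volume : Measure Ω)]
    (β : ℝ) (hβ : 0 < β) (hβ1 : β < 1)
    (g : ℕ → Ω → ℝ) (G : ℝ) (hG : 0 < G)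
    (hmeas : ∀ i, Measurable (g i))
    (hindep : iIndepFun (fun i ω => (g i ω) ^ 2) volume)
    (hstat : ∀ i j, (∫ ω : Ω, (g i ω) ^ 2 ∂(volume : Measure Ω)) =
                    (∫ ω : Ω, (g j ω) ^ 2 ∂(volume : Measure Ω)))
    (hbdd : ∀ i, ∀ᵐ ω : Ω, |(g i ω) ^ 2| ≤ G)
    (t₀ t : ℕ) (ht₀ : (t₀ : ℝ) > Real.logb β (1 - 1 / Real.sqrt 2)) (ht : t₀ < t)
    (hwin : (t : ℝ) - t₀ ≥ 1 / (1 - β ^ 2))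
    (δ : ℝ) (hδ : δ ∈ Set.Ioo (0 : ℝ) 1)
    (vhat : ℕ → Ω → ℝ)
    (hvhat : ∀ s : ℕ, ∀ ω : Ω,
      vhat s ω = (1 - β) / (1 - β ^ s) * ∑ i ∈ Icc 1 s, β ^ (s - i) * (g i ω) ^ 2) :
    (volume : Measure Ω)
      {ω | |vhat t ω - vhat t₀ ω| <
        Real.sqrt (8 * G ^ 2 * (1 - β) ^ 2 * ((t : ℝ) - t₀) * Real.log (2 / δ))} ≥
      ENNReal.ofReal (1 - δ) := by
  obtain ⟨hδ0, hδ1⟩ := hδ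
  have hpow := pow_le_half_of_logb_lt hβ hβ1 ht₀
  have hdiff : ∀ ω, vhat t ω - vhat t₀ ω = ∑ i ∈ Icc 1 t,
      (emaWeight β t i - emaWeight β t₀ i) * (g i ω ^ 2 - ∫ ω, g i ω ^ 2) := by
    intro ω
    simp only [hstat _ 1]
    rw [sum_Icc_emaWeight_sub_mul hβ.le hβ1 (by rintro rfl; norm_num at hpow) ht.le, hvhat, hvhat]
  have hY : ∀ i, ∀ᵐ ω, g i ω ^ 2 ∈ Set.Icc 0 G := fun i ↦
    (hbdd i).mono fun ω h ↦ ⟨sq_nonneg _, (le_abs_self _).trans h⟩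
  simp_rw [hdiff]
  refine le_trans (ENNReal.ofReal_le_ofReal ?_) (measure_abs_sum_mul_sub_integral_lt_ge
    (fun i ↦ ((hmeas i).pow_const 2).aemeasurable) hindep hY _ _
    (sum_sq_emaWeight_sub_le hβ.le hβ1 hpow ht.le hwin) (Real.sqrt_nonneg _))
  have hexponent : -2 * √(8 * G ^ 2 * (1 - β) ^ 2 * ((t : ℝ) - t₀) * Real.log (2 / δ)) ^ 2 /
      ((G - 0) ^ 2 * (8 * (1 - β) ^ 2 * ((t : ℝ) - t₀))) = -2 * Real.log (2 / δ) := by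
    have htt₀ : (0 : ℝ) < t - t₀ := by simpa using ht
    have hL : 0 < Real.log (2 / δ) := Real.log_pos (by rw [one_lt_div hδ0]; linarith)
    have hβ' : 1 - β ≠ 0 := (sub_pos.2 hβ1).ne'
    rw [Real.sq_sqrt (by positivity), sub_zero]
    field_simp
  rw [hexponent]
  linarith [two_mul_exp_neg_two_mul_log_le hδ0 (by linarith)]
end
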